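/- Let F be a field with char F ≠ 2 and char F ≠ 3, let α₁ ∈ F, and let A = A₅(α₁) = [[α₁, 0, 0, 0],[1, 2α₁-1, 1-α₁, 0]]. Then the invertible 2×2 matrices g over F with gA = A(g⊗g) are exactly the matrices [[1,0],[c,1]] with c ∈ F, and the 2×2 matrices D with DA = A(D⊗I₂ + I₂⊗D) are exactly the matrices [[0,0],[c,0]] with c ∈ F. -/

import Mathlib

open Matrix Kronecker

/-- The matrix of structure constants (MSC) of a 2-dimensional algebra, as a
`2 × (2 × 2)` matrix: the column indexed by `(j,k)` corresponds to the product
`e_j · e_k`, so the columns in order `(0,0), (0,1), (1,0), (1,1)` carry the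
entries `α₁ α₂ α₃ α₄` (first row) and `β₁ β₂ β₃ β₄` (second row). -/
def MSC {F : Type*} [Field F] (a1 a2 a3 a4 b1 b2 b3 b4 : F) :
    Matrix (Fin 2) (Fin 2 × Fin 2) F :=
  Matrix.of fun i j => !![a1, a2, a3, a4; b1, b2, b3, b4] i (finProdFinEquiv j)

/-- `g` is an automorphism matrix of the algebra with MSC `A`:
`g` is invertible and `g • A = A • (g ⊗ g)`. -/
def IsAutoMat {F : Type*} [Field F] (A : Matrix (Fin 2) (Fin 2 × Fin 2) F)
    (g : Matrix (Fin 2) (Fin 2) F) : Prop :=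
  IsUnit g ∧ g * A = A * (g ⊗ₖ g)

/-- `D` is a derivation matrix of the algebra with MSC `A`:
`D • A = A • (D ⊗ I + I ⊗ D)`. -/
def IsDerMat {F : Type*} [Field F] (A : Matrix (Fin 2) (Fin 2 × Fin 2) F)
    (D : Matrix (Fin 2) (Fin 2) F) : Prop :=
  D * A = A * (D ⊗ₖ (1 : Matrix (Fin 2) (Fin 2) F) + (1 : Matrix (Fin 2) (Fin 2) F) ⊗ₖ D)

/-! Both conditions are polynomial identities in the four entries of `g` (resp. `D`), which are
solved directly. For an automorphism, the `e₁`-coordinates of `e₂e₂` and `e₁e₁` give `α₁ g₀₁² = 0`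
and `α₁ g₀₀ + g₀₁ = α₁ g₀₀²`, hence `g₀₁ = 0`. Since `e₁e₂ + 2 e₂e₁ = e₂` for every `α₁`, the
`e₂`-coordinates of `e₁e₂` and `e₂e₁` combine to `g₁₁ (1 - g₀₀) = 0`, so `g₀₀ = 1` by invertibility,
and then the `e₂`-coordinate of `e₁e₁` forces `g₁₁ = 1`. -/

section

variable {F : Type*} [Field F]

@[simp]
theorem MSC_apply (a1 a2 a3 a4 b1 b2 b3 b4 : F) (i j k : Fin 2) :
    MSC a1 a2 a3 a4 b1 b2 b3 b4 i (j, k) = ![!![a1, a2; a3, a4], !![b1, b2; b3, b4]] i j k := by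
  fin_cases i <;> fin_cases j <;> fin_cases k <;> rfl

theorem eq_MSC_iff {M : Matrix (Fin 2) (Fin 2 × Fin 2) F} {a1 a2 a3 a4 b1 b2 b3 b4 : F} :
    M = MSC a1 a2 a3 a4 b1 b2 b3 b4 ↔
      M 0 (0, 0) = a1 ∧ M 0 (0, 1) = a2 ∧ M 0 (1, 0) = a3 ∧ M 0 (1, 1) = a4 ∧
        M 1 (0, 0) = b1 ∧ M 1 (0, 1) = b2 ∧ M 1 (1, 0) = b3 ∧ M 1 (1, 1) = b4 := by
  simp [← Matrix.ext_iff, Fin.forall_fin_two, Prod.forall, and_assoc]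

theorem MSC_inj {a1 a2 a3 a4 b1 b2 b3 b4 a1' a2' a3' a4' b1' b2' b3' b4' : F} :
    MSC a1 a2 a3 a4 b1 b2 b3 b4 = MSC a1' a2' a3' a4' b1' b2' b3' b4' ↔
      a1 = a1' ∧ a2 = a2' ∧ a3 = a3' ∧ a4 = a4' ∧ b1 = b1' ∧ b2 = b2' ∧ b3 = b3' ∧ b4 = b4' := by
  simp [eq_MSC_iff]

theorem exists_eq_lowerTriangular_iff (g : Matrix (Fin 2) (Fin 2) F) (d : F) :
    (∃ c, g = !![d, 0; c, d]) ↔ g 0 0 = d ∧ g 0 1 = 0 ∧ g 1 1 = d := by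
  constructor
  · rintro ⟨c, rfl⟩
    simp
  · rintro ⟨h00, h01, h11⟩
    exact ⟨g 1 0, (eta_fin_two g).trans (by rw [h00, h01, h11])⟩

def A₅ (a : F) : Matrix (Fin 2) (Fin 2 × Fin 2) F :=
  MSC a 0 0 0 1 (2 * a - 1) (1 - a) 0

theorem mul_A₅ (a x y z w : F) :
    !![x, y; z, w] * A₅ a =
      MSC (a * x + y) ((2 * a - 1) * y) ((1 - a) * y) 0
        (a * z + w) ((2 * a - 1) * w) ((1 - a) * w) 0 := by
  rw [eq_MSC_iff]
  simp only [A₅, MSC_apply, mul_apply, Fin.sum_univ_two, of_apply, cons_val', cons_val_zero,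
    cons_val_one, empty_val', cons_val_fin_one, Fin.isValue]
  refine ⟨?_, ?_, ?_, ?_, ?_, ?_, ?_, ?_⟩ <;> ring

theorem A₅_mul_kronecker_self (a x y z w : F) :
    A₅ a * (!![x, y; z, w] ⊗ₖ !![x, y; z, w]) =
      MSC (a * x ^ 2) (a * x * y) (a * x * y) (a * y ^ 2)
        (x ^ 2 + a * x * z) (x * y + (2 * a - 1) * x * w + (1 - a) * y * z)
        (x * y + (2 * a - 1) * y * z + (1 - a) * x * w) (y ^ 2 + a * y * w) := by
  rw [eq_MSC_iff]
  simp only [A₅, MSC_apply, mul_apply, Fin.sum_univ_two, Fintype.sum_prod_type,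
    kroneckerMap_apply, of_apply, cons_val', cons_val_zero, cons_val_one, empty_val',
    cons_val_fin_one, Fin.isValue]
  refine ⟨?_, ?_, ?_, ?_, ?_, ?_, ?_, ?_⟩ <;> ring

theorem A₅_mul_kronecker_derivation (a x y z w : F) :
    A₅ a * (!![x, y; z, w] ⊗ₖ 1 + 1 ⊗ₖ !![x, y; z, w]) =
      MSC (2 * a * x) (a * y) (a * y) 0
        (2 * x + a * z) (y + (2 * a - 1) * (x + w)) (y + (1 - a) * (x + w)) (a * y) := by
  rw [eq_MSC_iff]
  simp only [A₅, MSC_apply, mul_apply, Fin.sum_univ_two, Fintype.sum_prod_type,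
    kroneckerMap_apply, Matrix.add_apply, one_fin_two, of_apply, cons_val', cons_val_zero,
    cons_val_one, empty_val', cons_val_fin_one, Fin.isValue]
  refine ⟨?_, ?_, ?_, ?_, ?_, ?_, ?_, ?_⟩ <;> ring

theorem isAutoMat_A₅_iff (a : F) (g : Matrix (Fin 2) (Fin 2) F) :
    IsAutoMat (A₅ a) g ↔ g 0 0 = 1 ∧ g 0 1 = 0 ∧ g 1 1 = 1 := by
  obtain ⟨x, y, z, w, rfl⟩ : ∃ x y z w, g = !![x, y; z, w] := ⟨_, _, _, _, eta_fin_two g⟩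
  simp only [IsAutoMat, isUnit_iff_isUnit_det, det_fin_two_of, isUnit_iff_ne_zero, mul_A₅,
    A₅_mul_kronecker_self, MSC_inj, of_apply, cons_val', cons_val_zero, cons_val_one, empty_val',
    cons_val_fin_one, Fin.isValue]
  constructor
  -- `hᵢeⱼeₖ` compares the `eᵢ`-coordinates of the two sides at the product `eⱼeₖ`
  · rintro ⟨hdet, h₁e₁e₁, -, -, h₁e₂e₂, h₂e₁e₁, h₂e₁e₂, h₂e₂e₁, -⟩
    have hy : y = 0 := by
      obtain ha | hy := mul_eq_zero.mp h₁e₂e₂.symm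
      · subst ha
        linear_combination h₁e₁e₁
      · exact pow_eq_zero_iff two_ne_zero |>.mp hy
    subst hy
    have hw : w ≠ 0 := by
      rintro rfl
      simp at hdet
    have hx : x = 1 := by
      have : w * (1 - x) = 0 := by linear_combination h₂e₁e₂ + 2 * h₂e₂e₁
      linear_combination -(mul_eq_zero.mp this).resolve_left hw
    subst hx
    exact ⟨rfl, rfl, by linear_combination h₂e₁e₁⟩
  · rintro ⟨rfl, rfl, rfl⟩
    refine ⟨by simp, ?_, ?_, ?_, ?_, ?_, ?_, ?_, ?_⟩ <;> ring

theorem isDerMat_A₅_iff (a : F) (D : Matrix (Fin 2) (Fin 2) F) :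
    IsDerMat (A₅ a) D ↔ D 0 0 = 0 ∧ D 0 1 = 0 ∧ D 1 1 = 0 := by
  obtain ⟨x, y, z, w, rfl⟩ : ∃ x y z w, D = !![x, y; z, w] := ⟨_, _, _, _, eta_fin_two D⟩
  simp only [IsDerMat, mul_A₅, A₅_mul_kronecker_derivation, MSC_inj, of_apply, cons_val',
    cons_val_zero, cons_val_one, empty_val', cons_val_fin_one, Fin.isValue]
  constructor
  · rintro ⟨h₁e₁e₁, -, -, -, h₂e₁e₁, -, h₂e₂e₁, -⟩
    have hx : x = 0 := by linear_combination -h₁e₁e₁ - h₂e₂e₁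
    subst hx
    exact ⟨rfl, by linear_combination h₁e₁e₁, by linear_combination h₂e₁e₁⟩
  · rintro ⟨rfl, rfl, rfl⟩
    simp

end

theorem stmt_6_general {F : Type*} [Field F]
    (a1 : F)
    (A : Matrix (Fin 2) (Fin 2 × Fin 2) F)
    (hA : A = MSC a1 0 0 0 1 (2 * a1 - 1) (1 - a1) 0) :
    (∀ g : Matrix (Fin 2) (Fin 2) F,
      IsAutoMat A g ↔ ∃ c : F, g = !![1, 0; c, 1]) ∧
    (∀ D : Matrix (Fin 2) (Fin 2) F,
      IsDerMat A D ↔ ∃ c : F, D = !![0, 0; c, 0]) := by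
  subst hA
  exact ⟨fun g => (isAutoMat_A₅_iff a1 g).trans (exists_eq_lowerTriangular_iff g 1).symm,
    fun D => (isDerMat_A₅_iff a1 D).trans (exists_eq_lowerTriangular_iff D 0).symm⟩

theorem stmt_6 {F : Type*} [Field F] (h2 : ringChar F ≠ 2) (h3 : ringChar F ≠ 3)
    (a1 : F)
    (A : Matrix (Fin 2) (Fin 2 × Fin 2) F)
    (hA : A = MSC a1 0 0 0 1 (2 * a1 - 1) (1 - a1) 0) :
    (∀ g : Matrix (Fin 2) (Fin 2) F,
      IsAutoMat A g ↔ ∃ c : F, g = !![1, 0; c, 1]) ∧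
    (∀ D : Matrix (Fin 2) (Fin 2) F,
      IsDerMat A D ↔ ∃ c : F, D = !![0, 0; c, 0]) :=
  stmt_6_general a1 A hA
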